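/- arXiv:0806.4470 — 2 statements merged into one kernel-verified Lean document; each statement's English description precedes it below -/
import Mathlib

section
/- With the transformation rule R̃(z) = ξ'(z)^m R(ξ(z)) for a relative invariant R of index m, if R₁ has index m₁ and R₂ has index m₂ with R₂ nowhere zero, and φ(R₁,R₂) = m₁R₁R₂' − m₂R₂R₁', then [φ(R₁,R₂)]^{m₂} has index m₂(m₁+m₂+1) and R₂^{m₁+m₂+1} has index m₂(m₁+m₂+1), hence the function χ(R₁,R₂) = [m₁R₁R₂' − m₂R₂R₁']^{m₂} / R₂^{m₁+m₂+1} is an absolute invariant (index 0): χ̃(z) = χ(ξ(z)). -/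
lemma deriv_transform_aux (R ξ : ℝ → ℝ) (m : ℕ)
    (hR : ContDiff ℝ (⊤ : ℕ∞) R) (hξ : ContDiff ℝ (⊤ : ℕ∞) ξ) (z : ℝ) :
    deriv (fun t => (deriv ξ t) ^ m * R (ξ t)) z =
      ((m : ℝ) * (deriv ξ z) ^ (m - 1) * deriv (deriv ξ) z) * R (ξ z) +
        (deriv ξ z) ^ m * (deriv R (ξ z) * deriv ξ z) := by
  have hξi : ContDiff ℝ ((⊤ : ℕ∞) : WithTop ℕ∞) ξ := hξ.of_le (by simp)
  have hdξ := (contDiff_infty_iff_deriv.mp hξi).2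
  have h1 : HasDerivAt (fun t => (deriv ξ t) ^ m)
      ((m : ℝ) * (deriv ξ z) ^ (m - 1) * deriv (deriv ξ) z) z :=
    ((hdξ.differentiable (by simp) z).hasDerivAt).pow m
  have h2 : HasDerivAt (fun t => R (ξ t)) (deriv R (ξ z) * deriv ξ z) z :=
    ((hR.differentiable (by simp) (ξ z)).hasDerivAt).comp z
      ((hξ.differentiable (by simp) z).hasDerivAt)
  exact (h1.mul h2).deriv

/-- with `φ(R₁,R₂) = m₁R₁R₂' − m₂R₂R₁'`, the function
`χ(R₁,R₂) = φ(R₁,R₂)^{m₂} / R₂^{m₁+m₂+1}` is an absolute invariant: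
computing `χ` from the transformed functions `R̃ᵢ(z) = ξ'(z)^{mᵢ}Rᵢ(ξ z)`
gives `χ(ξ z)`. -/
theorem chi_is_absolute_invariant
    (R₁ R₂ ξ : ℝ → ℝ) (m₁ m₂ : ℕ) (hm₁ : 0 < m₁) (hm₂ : 0 < m₂)
    (hR₁ : ContDiff ℝ (⊤ : ℕ∞) R₁) (hR₂ : ContDiff ℝ (⊤ : ℕ∞) R₂)
    (hR₂0 : ∀ x, R₂ x ≠ 0)
    (hξ : ContDiff ℝ (⊤ : ℕ∞) ξ) (hξ' : ∀ z, deriv ξ z ≠ 0) :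
    ∀ z : ℝ,
      ((m₁ : ℝ) * ((deriv ξ z) ^ m₁ * R₁ (ξ z)) *
            deriv (fun t => (deriv ξ t) ^ m₂ * R₂ (ξ t)) z -
          (m₂ : ℝ) * ((deriv ξ z) ^ m₂ * R₂ (ξ z)) *
            deriv (fun t => (deriv ξ t) ^ m₁ * R₁ (ξ t)) z) ^ m₂ /
        ((deriv ξ z) ^ m₂ * R₂ (ξ z)) ^ (m₁ + m₂ + 1) =
      ((m₁ : ℝ) * R₁ (ξ z) * deriv R₂ (ξ z) -
          (m₂ : ℝ) * R₂ (ξ z) * deriv R₁ (ξ z)) ^ m₂ /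
        (R₂ (ξ z)) ^ (m₁ + m₂ + 1) := by
  intro z
  obtain ⟨k₁, rfl⟩ := Nat.exists_eq_succ_of_ne_zero hm₁.ne'
  obtain ⟨k₂, rfl⟩ := Nat.exists_eq_succ_of_ne_zero hm₂.ne'
  rw [deriv_transform_aux R₁ ξ _ hR₁ hξ z, deriv_transform_aux R₂ ξ _ hR₂ hξ z]
  set a := deriv ξ z with ha
  set c := deriv (deriv ξ) z
  set b := R₂ (ξ z)
  set r := R₁ (ξ z)
  set b' := deriv R₂ (ξ z)
  set r' := deriv R₁ (ξ z)
  have haz : a ≠ 0 := hξ' z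
  have hbz : b ≠ 0 := hR₂0 (ξ z)
  have key : ((k₁ + 1 : ℕ) : ℝ) * (a ^ (k₁ + 1) * r) *
        (((k₂ + 1 : ℕ) : ℝ) * a ^ (k₂ + 1 - 1) * c * b + a ^ (k₂ + 1) * (b' * a)) -
      ((k₂ + 1 : ℕ) : ℝ) * (a ^ (k₂ + 1) * b) *
        (((k₁ + 1 : ℕ) : ℝ) * a ^ (k₁ + 1 - 1) * c * r + a ^ (k₁ + 1) * (r' * a)) =
      a ^ ((k₁ + 1) + (k₂ + 1) + 1) *
        (((k₁ + 1 : ℕ) : ℝ) * r * b' - ((k₂ + 1 : ℕ) : ℝ) * b * r') := by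
    simp only [Nat.add_sub_cancel]
    push_cast
    ring
  rw [key, mul_pow, mul_pow, ← pow_mul, ← pow_mul, Nat.mul_comm]
  rw [mul_div_mul_left _ _ (pow_ne_zero _ haz)]
end

section
/- Define the sequence φ₀(S) = S and φ_{q}(S) = θ(q−1)·φ_{q−1}(S)·S₀' − σ·S₀·(φ_{q−1}(S))', where θ(q) = m + q(σ+1), S transforms with index m and S₀ with index σ under x = ξ(z). Then for every q ≥ 0, φ_q(S) transforms with index θ(q) = m + q(σ+1), i.e. the transformed φ_q computed from the transformed S, S₀ equals ξ'(z)^{m+q(σ+1)} times φ_q evaluated at ξ(z). -/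
open scoped ContDiff


/-- The indefinite sequence `φ_q(S)` of the paper:
`φ₀(S) = S`, `φ_{q+1}(S) = θ(q)·φ_q(S)·S₀' − σ·S₀·(φ_q(S))'`
with `θ(q) = m + q(σ+1)`. -/
noncomputable def phiSeq (S S₀ : ℝ → ℝ) (m σ : ℤ) : ℕ → (ℝ → ℝ)
  | 0 => S
  | q + 1 => fun x =>
      ((m + (q : ℤ) * (σ + 1) : ℤ) : ℝ) * phiSeq S S₀ m σ q x * deriv S₀ x -
        (σ : ℝ) * S₀ x * deriv (phiSeq S S₀ m σ q) x

private lemma phiSeq_contDiff (S S₀ : ℝ → ℝ) (m σ : ℤ)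
    (hS : ContDiff ℝ ∞ S) (hS₀ : ContDiff ℝ ∞ S₀) (q : ℕ) :
    ContDiff ℝ ∞ (phiSeq S S₀ m σ q) := by
  induction q with
  | zero => exact hS
  | succ q ih =>
    have h₁ : ContDiff ℝ ∞ (deriv S₀) := (contDiff_infty_iff_deriv.1 hS₀).2
    have h₂ : ContDiff ℝ ∞ (deriv (phiSeq S S₀ m σ q)) := (contDiff_infty_iff_deriv.1 ih).2
    exact ((contDiff_const.mul ih).mul h₁).sub ((contDiff_const.mul hS₀).mul h₂)

private lemma deriv_mix (F ξ : ℝ → ℝ) (k : ℤ) (hF : ContDiff ℝ ∞ F)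
    (hξ : ContDiff ℝ ∞ ξ) (hξ' : ∀ z, deriv ξ z ≠ 0) (z : ℝ) :
    deriv (fun t => (deriv ξ t) ^ k * F (ξ t)) z
      = (k : ℝ) * (deriv ξ z) ^ (k - 1) * deriv (deriv ξ) z * F (ξ z)
        + (deriv ξ z) ^ k * (deriv F (ξ z) * deriv ξ z) := by
  have hξd : ContDiff ℝ ∞ (deriv ξ) := (contDiff_infty_iff_deriv.1 hξ).2
  have h1 : HasDerivAt (fun t => (deriv ξ t) ^ k)
      (((k : ℝ) * (deriv ξ z) ^ (k - 1)) * deriv (deriv ξ) z) z :=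
    (hasDerivAt_zpow k _ (Or.inl (hξ' z))).comp z
      (hξd.differentiable (by simp) z).hasDerivAt
  have h2 : HasDerivAt (fun t => F (ξ t)) (deriv F (ξ z) * deriv ξ z) z :=
    (hF.differentiable (by simp) (ξ z)).hasDerivAt.comp z
      (hξ.differentiable (by simp) z).hasDerivAt
  exact (h1.mul h2).deriv

/-- if `S` transforms with index `m` and `S₀` with index `σ`
under `x = ξ(z)`, then `φ_q(S)` transforms with index `θ(q) = m + q(σ+1)`:
the sequence computed from the transformed functions equals
`ξ'(z)^{m+q(σ+1)}` times the original sequence evaluated at `ξ(z)`. -/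
theorem phiSeq_transforms_with_index
    (S S₀ ξ : ℝ → ℝ) (m σ : ℤ)
    (hS : ContDiff ℝ (⊤ : ℕ∞) S) (hS₀ : ContDiff ℝ (⊤ : ℕ∞) S₀)
    (hξ : ContDiff ℝ (⊤ : ℕ∞) ξ) (hξ' : ∀ z, deriv ξ z ≠ 0) :
    ∀ (q : ℕ) (z : ℝ),
      phiSeq (fun t => (deriv ξ t) ^ m * S (ξ t))
             (fun t => (deriv ξ t) ^ σ * S₀ (ξ t)) m σ q z =
        (deriv ξ z) ^ (m + (q : ℤ) * (σ + 1)) * phiSeq S S₀ m σ q (ξ z) := by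
  have hS' : ContDiff ℝ ∞ S := hS.of_le (by simp)
  have hS₀' : ContDiff ℝ ∞ S₀ := hS₀.of_le (by simp)
  have hξ'' : ContDiff ℝ ∞ ξ := hξ.of_le (by simp)
  intro q
  induction q with
  | zero => intro z; simp [phiSeq]
  | succ q ih =>
    intro z
    set θ : ℤ := m + (q : ℤ) * (σ + 1) with hθ
    have hfun : (phiSeq (fun t => (deriv ξ t) ^ m * S (ξ t))
        (fun t => (deriv ξ t) ^ σ * S₀ (ξ t)) m σ q)
        = fun t => (deriv ξ t) ^ θ * phiSeq S S₀ m σ q (ξ t) := funext ih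
    have hphi : ContDiff ℝ ∞ (phiSeq S S₀ m σ q) :=
      phiSeq_contDiff S S₀ m σ hS' hS₀' q
    have d1 : deriv (phiSeq (fun t => (deriv ξ t) ^ m * S (ξ t))
        (fun t => (deriv ξ t) ^ σ * S₀ (ξ t)) m σ q) z
        = (θ : ℝ) * (deriv ξ z) ^ (θ - 1) * deriv (deriv ξ) z * phiSeq S S₀ m σ q (ξ z)
          + (deriv ξ z) ^ θ * (deriv (phiSeq S S₀ m σ q) (ξ z) * deriv ξ z) := by
      rw [hfun]; exact deriv_mix _ ξ θ hphi hξ'' hξ' z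
    have d2 : deriv (fun t => (deriv ξ t) ^ σ * S₀ (ξ t)) z
        = (σ : ℝ) * (deriv ξ z) ^ (σ - 1) * deriv (deriv ξ) z * S₀ (ξ z)
          + (deriv ξ z) ^ σ * (deriv S₀ (ξ z) * deriv ξ z) :=
      deriv_mix S₀ ξ σ hS₀' hξ'' hξ' z
    show ((θ : ℤ) : ℝ) * phiSeq (fun t => (deriv ξ t) ^ m * S (ξ t))
          (fun t => (deriv ξ t) ^ σ * S₀ (ξ t)) m σ q z
          * deriv (fun t => (deriv ξ t) ^ σ * S₀ (ξ t)) z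
        - (σ : ℝ) * ((deriv ξ z) ^ σ * S₀ (ξ z))
          * deriv (phiSeq (fun t => (deriv ξ t) ^ m * S (ξ t))
              (fun t => (deriv ξ t) ^ σ * S₀ (ξ t)) m σ q) z
        = (deriv ξ z) ^ (m + ((q : ℕ) + 1 : ℤ) * (σ + 1)) *
            (((θ : ℤ) : ℝ) * phiSeq S S₀ m σ q (ξ z) * deriv S₀ (ξ z)
              - (σ : ℝ) * S₀ (ξ z) * deriv (phiSeq S S₀ m σ q) (ξ z))
    rw [ih, d1, d2]
    have hu : deriv ξ z ≠ 0 := hξ' z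
    have hexp : m + ((q : ℕ) + 1 : ℤ) * (σ + 1) = θ + σ + 1 := by rw [hθ]; ring
    rw [hexp]
    simp only [zpow_sub_one₀ hu, zpow_add_one₀ hu, zpow_add₀ hu]
    field_simp
    ring
end
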